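/- Suppose f : [0,∞) → [0,∞) and g : [0,∞) → [0,∞) are CND1 functions and f(0) = 0. Then the composition g ∘ f is also a CND1 function. Moreover, if g is strictly CND1 and f vanishes only at 0, then g ∘ f is strictly CND1. -/

import Mathlib

/-! An almost negative definite matrix with zero diagonal is a matrix of squared Euclidean
distances (Schoenberg): for a base point `i₀`, the matrix `(M i i₀ + M i₀ j - M i j) / 2` is
positive semidefinite, hence a Gram matrix, and the Gram vectors realise `M`. Applied to
`(f (‖xⁱ - xʲ‖²))` this gives points `pⁱ` with `‖pⁱ - pʲ‖² = f (‖xⁱ - xʲ‖²)`, so the matrix of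
`g ∘ f` at the `xⁱ` is the matrix of `g` at the `pⁱ`; if `f` vanishes only at `0`, distinct `xⁱ`
give distinct `pⁱ`. -/

/-- A symmetric real matrix `A` is *almost negative definite* if
`yᵀ A y ≤ 0` for every vector `y` whose coordinates sum to zero. -/
def IsAND {n : ℕ} (A : Matrix (Fin n) (Fin n) ℝ) : Prop :=
  A.IsSymm ∧ ∀ y : Fin n → ℝ, (∑ i, y i) = 0 →
    ∑ i, ∑ j, y i * A i j * y j ≤ 0

/-- A symmetric real matrix `A` is *strictly almost negative definite* if
moreover `yᵀ A y < 0` for every nonzero such `y`. -/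
def IsStrictAND {n : ℕ} (A : Matrix (Fin n) (Fin n) ℝ) : Prop :=
  A.IsSymm ∧ ∀ y : Fin n → ℝ, (∑ i, y i) = 0 → y ≠ 0 →
    ∑ i, ∑ j, y i * A i j * y j < 0

/-- `f` is conditionally negative definite of order 1: for all positive `n`, `d`
and points `x¹, …, xⁿ ∈ ℝ^d`, the matrix `(f(|xⁱ − xʲ|²))` is almost negative
definite. -/
def IsCND1 (f : ℝ → ℝ) : Prop :=
  ∀ (n d : ℕ), 0 < n → 0 < d → ∀ x : Fin n → EuclideanSpace ℝ (Fin d),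
    IsAND (Matrix.of fun i j => f (‖x i - x j‖ ^ 2))

/-- `f` is strictly CND1: the matrix `(f(|xⁱ − xʲ|²))` is strictly almost
negative definite whenever `n ≥ 2` and the points are distinct. -/
def IsStrictCND1 (f : ℝ → ℝ) : Prop :=
  IsCND1 f ∧
    ∀ (n d : ℕ), 2 ≤ n → 0 < d → ∀ x : Fin n → EuclideanSpace ℝ (Fin d),
      Function.Injective x →
      IsStrictAND (Matrix.of fun i j => f (‖x i - x j‖ ^ 2))

open Matrix

section Schoenberg

variable {ι : Type*} [Fintype ι]

theorem Matrix.dotProduct_mulVec_eq_sum_sum {R : Type*} [CommSemiring R] (A : Matrix ι ι R)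
    (v w : ι → R) : v ⬝ᵥ A *ᵥ w = ∑ i, ∑ j, v i * A i j * w j := by
  simp only [dotProduct, mulVec, Finset.mul_sum, mul_assoc]

noncomputable def Matrix.schoenbergMatrix (M : Matrix ι ι ℝ) (i₀ : ι) : Matrix ι ι ℝ :=
  of fun i j => (M i i₀ + M i₀ j - M i j) / 2

theorem Matrix.dotProduct_schoenbergMatrix_mulVec (M : Matrix ι ι ℝ) (i₀ : ι) (z : ι → ℝ) :
    z ⬝ᵥ M.schoenbergMatrix i₀ *ᵥ z =
      ((z ⬝ᵥ M.col i₀) * (∑ i, z i) + (∑ i, z i) * (M *ᵥ z) i₀ - z ⬝ᵥ M *ᵥ z) / 2 := by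
  rw [dotProduct_mulVec_eq_sum_sum, dotProduct_mulVec_eq_sum_sum]
  simp only [dotProduct, mulVec, col_apply, Finset.sum_mul_sum, ← Finset.sum_add_distrib,
    ← Finset.sum_sub_distrib, Finset.sum_div]
  refine Finset.sum_congr rfl fun i _ => Finset.sum_congr rfl fun j _ => ?_
  simp only [schoenbergMatrix, of_apply]
  ring

theorem Matrix.posSemidef_schoenbergMatrix [DecidableEq ι] {M : Matrix ι ι ℝ} (hMs : M.IsSymm)
    (hM : ∀ y : ι → ℝ, ∑ i, y i = 0 → y ⬝ᵥ M *ᵥ y ≤ 0) {i₀ : ι} (hMi₀ : M i₀ i₀ = 0) :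
    (M.schoenbergMatrix i₀).PosSemidef := by
  refine .of_dotProduct_mulVec_nonneg ?_ fun z => ?_
  · ext i j
    simp only [conjTranspose_apply, star_trivial, schoenbergMatrix, of_apply, hMs.apply]
    ring
  · set s := ∑ i, z i
    -- `z - s • eᵢ₀` has coordinate sum zero, and its `M`-form is `-2` times
    -- the `schoenbergMatrix M i₀`-form of `z`
    have hy := hM (z - s • Pi.single i₀ 1) (by simp [Finset.sum_sub_distrib, Pi.single_apply, s])
    simp only [mulVec_sub, mulVec_smul, sub_dotProduct, dotProduct_sub, smul_dotProduct,
      dotProduct_smul, mulVec_single_one, single_one_dotProduct, col_apply, hMi₀,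
      smul_eq_mul] at hy
    rw [star_trivial, dotProduct_schoenbergMatrix_mulVec]
    linarith

open scoped MatrixOrder in
theorem Matrix.PosSemidef.exists_gram_eq [DecidableEq ι] {B : Matrix ι ι ℝ} (hB : B.PosSemidef) :
    ∃ v : ι → EuclideanSpace ℝ ι, gram ℝ v = B := by
  obtain ⟨P, rfl⟩ := CStarAlgebra.nonneg_iff_eq_star_mul_self.mp hB.nonneg
  refine ⟨fun i => WithLp.toLp 2 (fun k => P k i), ?_⟩
  ext i j
  simp [gram_apply, EuclideanSpace.inner_eq_star_dotProduct, mul_apply, dotProduct, mul_comm]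

theorem Matrix.exists_norm_sub_sq_eq [Nonempty ι] {M : Matrix ι ι ℝ} (hMs : M.IsSymm)
    (hM0 : ∀ i, M i i = 0) (hM : ∀ y : ι → ℝ, ∑ i, y i = 0 → y ⬝ᵥ M *ᵥ y ≤ 0) :
    ∃ p : ι → EuclideanSpace ℝ ι, ∀ i j, ‖p i - p j‖ ^ 2 = M i j := by
  classical
  let i₀ : ι := Classical.arbitrary ι
  obtain ⟨p, hp⟩ := (posSemidef_schoenbergMatrix hMs hM (hM0 i₀)).exists_gram_eq
  refine ⟨p, fun i j => ?_⟩
  rw [norm_sub_sq_real, ← real_inner_self_eq_norm_sq, ← real_inner_self_eq_norm_sq]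
  simp only [← gram_apply, hp, schoenbergMatrix, of_apply, hM0, hMs.apply]
  ring

end Schoenberg

theorem IsAND.dotProduct_mulVec_nonpos {n : ℕ} {A : Matrix (Fin n) (Fin n) ℝ} (hA : IsAND A)
    {y : Fin n → ℝ} (hy : ∑ i, y i = 0) : y ⬝ᵥ A *ᵥ y ≤ 0 := by
  rw [dotProduct_mulVec_eq_sum_sum]
  exact hA.2 y hy

theorem IsCND1.exists_norm_sub_sq_eq {f : ℝ → ℝ} (hf : IsCND1 f) (hf0 : f 0 = 0) {n d : ℕ}
    (hn : 0 < n) (hd : 0 < d) (x : Fin n → EuclideanSpace ℝ (Fin d)) :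
    ∃ p : Fin n → EuclideanSpace ℝ (Fin n), ∀ i j, ‖p i - p j‖ ^ 2 = f (‖x i - x j‖ ^ 2) := by
  have : Nonempty (Fin n) := ⟨⟨0, hn⟩⟩
  have hA := hf n d hn hd x
  exact Matrix.exists_norm_sub_sq_eq hA.1 (by simp [hf0]) fun y hy => hA.dotProduct_mulVec_nonpos hy

theorem IsCND1.comp {f g : ℝ → ℝ} (hg : IsCND1 g) (hf : IsCND1 f) (hf0 : f 0 = 0) :
    IsCND1 (g ∘ f) := by
  intro n d hn hd x
  obtain ⟨p, hp⟩ := hf.exists_norm_sub_sq_eq hf0 hn hd x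
  simpa only [Function.comp_apply, ← hp] using hg n n hn hn p

theorem IsStrictCND1.comp {f g : ℝ → ℝ} (hg : IsStrictCND1 g) (hf : IsCND1 f) (hf0 : f 0 = 0)
    (hf_eq_zero : ∀ t : ℝ, 0 ≤ t → f t = 0 → t = 0) : IsStrictCND1 (g ∘ f) := by
  refine ⟨hg.1.comp hf hf0, fun n d hn hd x hx => ?_⟩
  obtain ⟨p, hp⟩ := hf.exists_norm_sub_sq_eq hf0 (by omega) hd x
  have hp_inj : Function.Injective p := fun i j hij => hx <| by
    have h := hf_eq_zero (‖x i - x j‖ ^ 2) (sq_nonneg _) <| by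
      rw [← hp, hij, sub_self, norm_zero, sq, zero_mul]
    rwa [sq_eq_zero_iff, norm_eq_zero, sub_eq_zero] at h
  simpa only [Function.comp_apply, ← hp] using hg.2 n n hn (by omega) p hp_inj

theorem stmt3 (f g : ℝ → ℝ)
    (hf : IsCND1 f) (hg : IsCND1 g) (hf0 : f 0 = 0) :
    IsCND1 (g ∘ f) ∧
      (IsStrictCND1 g → (∀ t : ℝ, 0 ≤ t → f t = 0 → t = 0) →
        IsStrictCND1 (g ∘ f)) :=
  ⟨hg.comp hf hf0, fun hgs hf_eq_zero => hgs.comp hf hf0 hf_eq_zero⟩
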